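/- Let T be a finite double groupoid satisfying the filling condition (every compatible pair (g,x) ∈ V ×_{t,r} H bounds a box). Define on the vector space kT with basis the boxes: multiplication A·B = vertical composite if composable, else 0; comultiplication Δ(A) = Σ_{XY=A} (1/⌝(Y)) X⊗Y; counit ε(A) = ⌜(A) if A is a horizontal identity box, else 0. Then (kT, Δ, ε) is a coassociative coalgebra. -/
import Mathlib


/-- A (finite) groupoid, presented algebraically: a set `A` of arrows over a base `P`,
with source `s`, target `e`, identities, a (total, junk-valued when undefined)
composition, and inverses. Composition is written left to right: `comp a b` is
defined when `e a = s b`. -/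
structure Gpd (P : Type) (A : Type) where
  s : A → P
  e : A → P
  id : P → A
  comp : A → A → A
  inv : A → A
  s_id : ∀ p, s (id p) = p
  e_id : ∀ p, e (id p) = p
  s_comp : ∀ a b, e a = s b → s (comp a b) = s a
  e_comp : ∀ a b, e a = s b → e (comp a b) = e b
  id_comp : ∀ a, comp (id (s a)) a = a
  comp_id : ∀ a, comp a (id (e a)) = a
  comp_assoc : ∀ a b c, e a = s b → e b = s c →
    comp (comp a b) c = comp a (comp b c)
  s_inv : ∀ a, s (inv a) = e a
  e_inv : ∀ a, e (inv a) = s a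
  inv_comp : ∀ a, comp (inv a) a = id (e a)
  comp_inv : ∀ a, comp a (inv a) = id (s a)

/-- A finite double groupoid: boxes `B`, horizontal arrows `H`, vertical arrows `V`,
points `P`; boxes carry a horizontal groupoid structure over `V`
(source = left side, target = right side) and a vertical groupoid structure over `H`
(source = top side, target = bottom side), compatible with the side groupoids,
satisfying the interchange law. -/
structure DoubleGroupoid where
  P : Type
  H : Type
  V : Type
  B : Type
  [fP : Fintype P]
  [fH : Fintype H]
  [fV : Fintype V]
  [fB : Fintype B]
  [dP : DecidableEq P]
  [dH : DecidableEq H]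
  [dV : DecidableEq V]
  [dB : DecidableEq B]
  /-- horizontal arrows: source `s` = left point, target `e` = right point -/
  gH : Gpd P H
  /-- vertical arrows: source `s` = top point, target `e` = bottom point -/
  gV : Gpd P V
  /-- horizontal composition of boxes; base `V`, source = left side, target = right side -/
  gBh : Gpd V B
  /-- vertical composition of boxes; base `H`, source = top side, target = bottom side -/
  gBv : Gpd H B
  corner_tl : ∀ A, gH.s (gBv.s A) = gV.s (gBh.s A)
  corner_tr : ∀ A, gH.e (gBv.s A) = gV.s (gBh.e A)
  corner_bl : ∀ A, gH.s (gBv.e A) = gV.e (gBh.s A)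
  corner_br : ∀ A, gH.e (gBv.e A) = gV.e (gBh.e A)
  t_hcomp : ∀ A B, gBh.e A = gBh.s B →
    gBv.s (gBh.comp A B) = gH.comp (gBv.s A) (gBv.s B)
  b_hcomp : ∀ A B, gBh.e A = gBh.s B →
    gBv.e (gBh.comp A B) = gH.comp (gBv.e A) (gBv.e B)
  l_vcomp : ∀ A B, gBv.e A = gBv.s B →
    gBh.s (gBv.comp A B) = gV.comp (gBh.s A) (gBh.s B)
  r_vcomp : ∀ A B, gBv.e A = gBv.s B →
    gBh.e (gBv.comp A B) = gV.comp (gBh.e A) (gBh.e B)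
  t_idh : ∀ g, gBv.s (gBh.id g) = gH.id (gV.s g)
  b_idh : ∀ g, gBv.e (gBh.id g) = gH.id (gV.e g)
  l_idv : ∀ x, gBh.s (gBv.id x) = gV.id (gH.s x)
  r_idv : ∀ x, gBh.e (gBv.id x) = gV.id (gH.e x)
  t_hinv : ∀ A, gBv.s (gBh.inv A) = gH.inv (gBv.s A)
  b_hinv : ∀ A, gBv.e (gBh.inv A) = gH.inv (gBv.e A)
  l_vinv : ∀ A, gBh.s (gBv.inv A) = gV.inv (gBh.s A)
  r_vinv : ∀ A, gBh.e (gBv.inv A) = gV.inv (gBh.e A)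
  hinv_vinv : ∀ A, gBh.inv (gBv.inv A) = gBv.inv (gBh.inv A)
  idh_vcomp : ∀ g h, gV.e g = gV.s h →
    gBv.comp (gBh.id g) (gBh.id h) = gBh.id (gV.comp g h)
  idv_hcomp : ∀ x y, gH.e x = gH.s y →
    gBh.comp (gBv.id x) (gBv.id y) = gBv.id (gH.comp x y)
  id_id : ∀ p, gBh.id (gV.id p) = gBv.id (gH.id p)
  interchange : ∀ A B C D,
    gBh.e A = gBh.s B → gBh.e C = gBh.s D →
    gBv.e A = gBv.s C → gBv.e B = gBv.s D →
    gBv.comp (gBh.comp A B) (gBh.comp C D) =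
      gBh.comp (gBv.comp A C) (gBv.comp B D)

namespace DoubleGroupoid

instance (T : DoubleGroupoid) : Fintype T.P := T.fP
instance (T : DoubleGroupoid) : Fintype T.H := T.fH
instance (T : DoubleGroupoid) : Fintype T.V := T.fV
instance (T : DoubleGroupoid) : Fintype T.B := T.fB
instance (T : DoubleGroupoid) : DecidableEq T.P := T.dP
instance (T : DoubleGroupoid) : DecidableEq T.H := T.dH
instance (T : DoubleGroupoid) : DecidableEq T.V := T.dV
instance (T : DoubleGroupoid) : DecidableEq T.B := T.dB

variable (T : DoubleGroupoid)

/-- top side of a box -/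
def top (A : T.B) : T.H := T.gBv.s A
/-- bottom side of a box -/
def bot (A : T.B) : T.H := T.gBv.e A
/-- left side of a box -/
def left (A : T.B) : T.V := T.gBh.s A
/-- right side of a box -/
def right (A : T.B) : T.V := T.gBh.e A

/-- horizontal composition -/
def hcomp (A B : T.B) : T.B := T.gBh.comp A B
/-- vertical composition ("A over B") -/
def vcomp (A B : T.B) : T.B := T.gBv.comp A B
/-- horizontal inverse -/
def hinv (A : T.B) : T.B := T.gBh.inv A
/-- vertical inverse -/
def vinv (A : T.B) : T.B := T.gBv.inv A
/-- total inverse `A⁻¹ = (Aʰ)ᵛ` -/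
def tinv (A : T.B) : T.B := T.gBv.inv (T.gBh.inv A)

/-- top-left vertex -/
def tl (A : T.B) : T.P := T.gH.s (T.top A)
/-- top-right vertex -/
def tr (A : T.B) : T.P := T.gH.e (T.top A)
/-- bottom-left vertex -/
def bl (A : T.B) : T.P := T.gH.s (T.bot A)
/-- bottom-right vertex -/
def br (A : T.B) : T.P := T.gH.e (T.bot A)
/-- right-top vertex (equal to `tr` by the corner compatibilities) -/
def rt (A : T.B) : T.P := T.gV.s (T.right A)
/-- right-bottom vertex -/
def rb (A : T.B) : T.P := T.gV.e (T.right A)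
/-- left-top vertex -/
def lt (A : T.B) : T.P := T.gV.s (T.left A)
/-- left-bottom vertex -/
def lb (A : T.B) : T.P := T.gV.e (T.left A)

/-- upper-left corner function: number of boxes with the same left and top sides -/
noncomputable def ulc (A : T.B) : ℕ :=
  Nat.card {U : T.B // T.left U = T.left A ∧ T.top U = T.top A}
/-- upper-right corner function: number of boxes with the same right and top sides -/
noncomputable def urc (A : T.B) : ℕ :=
  Nat.card {U : T.B // T.right U = T.right A ∧ T.top U = T.top A}
/-- lower-left corner function: number of boxes with the same left and bottom sides -/
noncomputable def llc (A : T.B) : ℕ :=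
  Nat.card {U : T.B // T.left U = T.left A ∧ T.bot U = T.bot A}
/-- lower-right corner function: number of boxes with the same right and bottom sides -/
noncomputable def lrc (A : T.B) : ℕ :=
  Nat.card {U : T.B // T.right U = T.right A ∧ T.bot U = T.bot A}

/-- the double identity box `Θ_P` at a point -/
def thetaBox (p : T.P) : T.B := T.gBv.id (T.gH.id p)

/-- the filling condition: every compatible pair (right side, top side) bounds a box -/
def Filling : Prop :=
  ∀ (g : T.V) (x : T.H), T.gH.e x = T.gV.s g →
    ∃ A : T.B, T.top A = x ∧ T.right A = g

/-- membership in the core groupoid `D`: the left and bottom sides are identities -/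
def isCoreD (D : T.B) : Prop :=
  T.left D = T.gV.id (T.gV.s (T.left D)) ∧ T.bot D = T.gH.id (T.gH.s (T.bot D))

/-- membership in the core groupoid `E`: the right and top sides are identities -/
def isCoreE (E : T.B) : Prop :=
  T.right E = T.gV.id (T.gV.s (T.right E)) ∧ T.top E = T.gH.id (T.gH.s (T.top E))

/-- `θ(p)`: the number of boxes whose left and bottom sides are identities at `p` -/
noncomputable def thetaLB (p : T.P) : ℕ :=
  Nat.card {U : T.B // T.left U = T.gV.id p ∧ T.bot U = T.gH.id p}

end DoubleGroupoid

open scoped Classical in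
/-- the comultiplication `Δ(A) = Σ_{XY = A} (1/⌝(Y)) X ⊗ Y` on the span of the boxes. -/
noncomputable def DoubleGroupoid.comul (k : Type) [Field k] (T : DoubleGroupoid) :
    (T.B →₀ k) →ₗ[k] TensorProduct k (T.B →₀ k) (T.B →₀ k) :=
  Finsupp.lsum k fun A =>
    LinearMap.toSpanSingleton k (TensorProduct k (T.B →₀ k) (T.B →₀ k))
    (∑ X : T.B, ∑ Y : T.B,
      (if T.right X = T.left Y ∧ T.hcomp X Y = A then (T.urc Y : k)⁻¹ else 0) •
        TensorProduct.tmul k (Finsupp.single X (1 : k)) (Finsupp.single Y (1 : k)))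

open scoped Classical in
/-- the counit `ε(A) = ⌜(A)` if `A` is a horizontal identity box, `0` otherwise. -/
noncomputable def DoubleGroupoid.counit (k : Type) [Field k] (T : DoubleGroupoid) :
    (T.B →₀ k) →ₗ[k] k :=
  Finsupp.lsum k fun A => LinearMap.toSpanSingleton k k
    (if ∃ g : T.V, A = T.gBh.id g then (T.ulc A : k) else 0)

/-! ### Auxiliary lemmas -/

namespace Gpd

variable {P A : Type} (G : Gpd P A)

theorem inv_id (p : P) : G.inv (G.id p) = G.id p := by
  have h1 := G.comp_id (G.inv (G.id p))
  rw [G.e_inv, G.s_id] at h1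
  have h2 := G.inv_comp (G.id p)
  rw [G.e_id] at h2
  rw [← h1]; exact h2

theorem inv_inv (a : A) : G.inv (G.inv a) = a := by
  have hA : G.comp (G.inv (G.inv a)) (G.inv a) = G.id (G.s a) := by
    rw [G.inv_comp, G.e_inv]
  have hB : G.comp (G.inv a) a = G.id (G.e a) := G.inv_comp a
  have h1 := G.comp_assoc (G.inv (G.inv a)) (G.inv a) a
    (by rw [G.e_inv, G.s_inv]) (by rw [G.e_inv])
  rw [hA, hB, G.id_comp] at h1
  have h2 := G.comp_id (G.inv (G.inv a))
  rw [G.e_inv, G.s_inv] at h2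
  rw [← h2]; exact h1.symm

theorem comp_inv_cancel_right (a b : A) (h : G.e a = G.s b) :
    G.comp (G.comp a b) (G.inv b) = a := by
  rw [G.comp_assoc a b (G.inv b) h (by rw [G.s_inv]), G.comp_inv, ← h, G.comp_id]

theorem inv_comp_cancel_right (a b : A) (h : G.e a = G.e b) :
    G.comp (G.comp a (G.inv b)) b = a := by
  rw [G.comp_assoc a (G.inv b) b (by rw [G.s_inv, h]) (by rw [G.e_inv]), G.inv_comp,
    ← h, G.comp_id]

end Gpd

namespace DoubleGroupoid

variable (T : DoubleGroupoid)

theorem right_def (A : T.B) : T.right A = T.gBh.e A := rfl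
theorem left_def (A : T.B) : T.left A = T.gBh.s A := rfl
theorem top_def (A : T.B) : T.top A = T.gBv.s A := rfl
theorem hcomp_def (A B : T.B) : T.hcomp A B = T.gBh.comp A B := rfl
theorem hinv_def (A : T.B) : T.hinv A = T.gBh.inv A := rfl

theorem right_hinv (A : T.B) : T.right (T.hinv A) = T.left A := T.gBh.e_inv A
theorem left_hinv (A : T.B) : T.left (T.hinv A) = T.right A := T.gBh.s_inv A
theorem top_hinv (A : T.B) : T.top (T.hinv A) = T.gH.inv (T.top A) := T.t_hinv A
theorem right_id (g : T.V) : T.right (T.gBh.id g) = g := T.gBh.e_id g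
theorem left_id (g : T.V) : T.left (T.gBh.id g) = g := T.gBh.s_id g
theorem top_id (g : T.V) : T.top (T.gBh.id g) = T.gH.id (T.gV.s g) := T.t_idh g
theorem hinv_hinv (A : T.B) : T.hinv (T.hinv A) = A := T.gBh.inv_inv A
theorem s_top (A : T.B) : T.gH.s (T.top A) = T.gV.s (T.left A) := T.corner_tl A

/-- composability of boxes gives composability of tops -/
theorem top_compat (X Y : T.B) (h : T.right X = T.left Y) :
    T.gH.e (T.top X) = T.gH.s (T.top Y) := by
  show T.gH.e (T.gBv.s X) = T.gH.s (T.gBv.s Y)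
  rw [T.corner_tr, T.corner_tl]
  exact congrArg T.gV.s h

theorem right_hcomp (X Y : T.B) (h : T.right X = T.left Y) :
    T.right (T.hcomp X Y) = T.right Y := T.gBh.e_comp X Y h

theorem left_hcomp (X Y : T.B) (h : T.right X = T.left Y) :
    T.left (T.hcomp X Y) = T.left X := T.gBh.s_comp X Y h

theorem top_hcomp (X Y : T.B) (h : T.right X = T.left Y) :
    T.top (T.hcomp X Y) = T.gH.comp (T.top X) (T.top Y) := T.t_hcomp X Y h

theorem hcomp_assoc (U V W : T.B) (h1 : T.right U = T.left V)
    (h2 : T.right V = T.left W) :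
    T.hcomp (T.hcomp U V) W = T.hcomp U (T.hcomp V W) :=
  T.gBh.comp_assoc U V W h1 h2

theorem urc_pos (A : T.B) : 0 < T.urc A := by
  have : Nonempty {U : T.B // T.right U = T.right A ∧ T.top U = T.top A} :=
    ⟨⟨A, rfl, rfl⟩⟩
  exact Nat.card_pos

/-- translation invariance of the upper-right corner function -/
theorem urc_hcomp (V Y : T.B) (h : T.right V = T.left Y) :
    T.urc (T.hcomp V Y) = T.urc V := by
  apply Nat.card_congr
  refine
    { toFun := fun U => ⟨T.hcomp U.1 (T.hinv Y), ?_, ?_⟩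
      invFun := fun W => ⟨T.hcomp W.1 Y, ?_, ?_⟩
      left_inv := ?_
      right_inv := ?_ }
  · obtain ⟨U, hr, ht⟩ := U
    have hrY : T.right U = T.right Y := by rw [hr, T.right_hcomp V Y h]
    have hc : T.right U = T.left (T.hinv Y) := by rw [T.left_hinv, hrY]
    rw [T.right_hcomp _ _ hc, T.right_hinv, ← h]
  · obtain ⟨U, hr, ht⟩ := U
    have hrY : T.right U = T.right Y := by rw [hr, T.right_hcomp V Y h]
    have hc : T.right U = T.left (T.hinv Y) := by rw [T.left_hinv, hrY]
    rw [T.top_hcomp _ _ hc, ht, T.top_hcomp V Y h, T.top_hinv]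
    exact T.gH.comp_inv_cancel_right _ _ (T.top_compat V Y h)
  · obtain ⟨W, hr, ht⟩ := W
    have hc2 : T.right W = T.left Y := by rw [hr, h]
    rw [T.right_hcomp _ _ hc2, T.right_hcomp _ _ h]
  · obtain ⟨W, hr, ht⟩ := W
    have hc2 : T.right W = T.left Y := by rw [hr, h]
    rw [T.top_hcomp _ _ hc2, T.top_hcomp _ _ h, ht]
  · rintro ⟨U, hr, ht⟩
    have hrY : T.right U = T.right Y := by rw [hr, T.right_hcomp V Y h]
    exact Subtype.ext (T.gBh.inv_comp_cancel_right U Y hrY)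
  · rintro ⟨W, hr, ht⟩
    have hc2 : T.right W = T.left Y := by rw [hr, h]
    exact Subtype.ext (T.gBh.comp_inv_cancel_right W Y hc2)

/-- the upper-left corner count of the identity box on `left A` equals the
upper-right corner count of `A` -/
theorem ulc_id_left (A : T.B) : T.ulc (T.gBh.id (T.left A)) = T.urc A := by
  apply Nat.card_congr
  refine
    { toFun := fun U => ⟨T.hcomp (T.hinv U.1) A, ?_, ?_⟩
      invFun := fun W => ⟨T.hinv (T.hcomp W.1 (T.hinv A)), ?_, ?_⟩
      left_inv := ?_
      right_inv := ?_ }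
  · obtain ⟨U, hl, ht⟩ := U
    have hl' : T.left U = T.left A := by rw [hl, T.left_id]
    have hc : T.right (T.hinv U) = T.left A := by rw [T.right_hinv, hl']
    rw [T.right_hcomp _ _ hc]
  · obtain ⟨U, hl, ht⟩ := U
    have hl' : T.left U = T.left A := by rw [hl, T.left_id]
    have hc : T.right (T.hinv U) = T.left A := by rw [T.right_hinv, hl']
    rw [T.top_hcomp _ _ hc, T.top_hinv, ht, T.top_id, T.gH.inv_id, ← T.s_top,
      T.gH.id_comp]
  · obtain ⟨W, hr, ht⟩ := W
    have hc2 : T.right W = T.left (T.hinv A) := by rw [T.left_hinv, hr]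
    rw [T.left_hinv, T.right_hcomp _ _ hc2, T.right_hinv, T.left_id]
  · obtain ⟨W, hr, ht⟩ := W
    have hc2 : T.right W = T.left (T.hinv A) := by rw [T.left_hinv, hr]
    rw [T.top_hinv, T.top_hcomp _ _ hc2, T.top_hinv, ht, T.top_id, T.gH.comp_inv,
      T.gH.inv_id, T.s_top]
  · rintro ⟨U, hl, ht⟩
    have hl' : T.left U = T.left A := by rw [hl, T.left_id]
    have hc : T.right (T.hinv U) = T.left A := by rw [T.right_hinv, hl']
    apply Subtype.ext
    show T.hinv (T.hcomp (T.hcomp (T.hinv U) A) (T.hinv A)) = U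
    rw [show T.hcomp (T.hcomp (T.hinv U) A) (T.hinv A) = T.hinv U from
      T.gBh.comp_inv_cancel_right _ _ hc, T.hinv_hinv]
  · rintro ⟨W, hr, ht⟩
    apply Subtype.ext
    show T.hcomp (T.hinv (T.hinv (T.hcomp W (T.hinv A)))) A = W
    rw [T.hinv_hinv]
    exact T.gBh.inv_comp_cancel_right W A hr

/-- for an identity box the upper-left and upper-right corner counts agree -/
theorem ulc_id_eq_urc_id (g : T.V) : T.ulc (T.gBh.id g) = T.urc (T.gBh.id g) := by
  apply Nat.card_congr
  refine
    { toFun := fun U => ⟨T.hinv U.1, ?_, ?_⟩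
      invFun := fun W => ⟨T.hinv W.1, ?_, ?_⟩
      left_inv := ?_
      right_inv := ?_ }
  · obtain ⟨U, hl, ht⟩ := U
    rw [T.right_hinv, hl, T.left_id, T.right_id]
  · obtain ⟨U, hl, ht⟩ := U
    rw [T.top_hinv, ht, T.top_id, T.gH.inv_id]
  · obtain ⟨W, hr, ht⟩ := W
    rw [T.left_hinv, hr, T.right_id, T.left_id]
  · obtain ⟨W, hr, ht⟩ := W
    rw [T.top_hinv, ht, T.top_id, T.gH.inv_id]
  · rintro ⟨U, hl, ht⟩
    exact Subtype.ext (T.hinv_hinv U)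
  · rintro ⟨W, hr, ht⟩
    exact Subtype.ext (T.hinv_hinv W)

theorem urc_ne_zero (k : Type) [Field k] [CharZero k] (A : T.B) :
    ((T.urc A : k)) ≠ 0 :=
  Nat.cast_ne_zero.mpr (T.urc_pos A).ne'

open scoped Classical in
theorem counit_single (k : Type) [Field k] (X : T.B) :
    T.counit k (Finsupp.single X (1 : k)) =
      if ∃ g : T.V, X = T.gBh.id g then (T.ulc X : k) else 0 := by
  simp [DoubleGroupoid.counit, LinearMap.toSpanSingleton_apply]

open scoped Classical in
theorem comul_single (k : Type) [Field k] (A : T.B) :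
    T.comul k (Finsupp.single A (1 : k)) =
      ∑ X : T.B, ∑ Y : T.B,
        (if T.right X = T.left Y ∧ T.hcomp X Y = A then (T.urc Y : k)⁻¹ else 0) •
          (Finsupp.single X (1 : k) ⊗ₜ[k] Finsupp.single Y (1 : k)) := by
  simp [DoubleGroupoid.comul, LinearMap.toSpanSingleton_apply]

end DoubleGroupoid

private theorem sum_comm3 {M : Type*} [AddCommMonoid M] {ι : Type} [Fintype ι]
    (f : ι → ι → ι → M) :
    ∑ y : ι, ∑ u : ι, ∑ v : ι, f y u v = ∑ u : ι, ∑ v : ι, ∑ y : ι, f y u v := by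
  rw [Finset.sum_comm]
  exact Finset.sum_congr rfl fun u _ => Finset.sum_comm

private theorem sum_comm4 {M : Type*} [AddCommMonoid M] {ι : Type} [Fintype ι]
    (f : ι → ι → ι → ι → M) :
    ∑ x : ι, ∑ y : ι, ∑ u : ι, ∑ v : ι, f x y u v
      = ∑ y : ι, ∑ u : ι, ∑ v : ι, ∑ x : ι, f x y u v := by
  rw [Finset.sum_comm]
  refine Finset.sum_congr rfl fun y _ => ?_
  rw [Finset.sum_comm]
  exact Finset.sum_congr rfl fun u _ => Finset.sum_comm

/-- for a finite double groupoid satisfying the filling condition,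
`(kT, Δ, ε)` is a coassociative counital coalgebra. -/
theorem stmt11 (k : Type) [Field k] [CharZero k]
    (T : DoubleGroupoid) (hfill : T.Filling) :
    ((TensorProduct.assoc k (T.B →₀ k) (T.B →₀ k) (T.B →₀ k)).toLinearMap ∘ₗ
        TensorProduct.map (T.comul k) LinearMap.id ∘ₗ T.comul k =
      TensorProduct.map LinearMap.id (T.comul k) ∘ₗ T.comul k) ∧
    ((TensorProduct.lid k (T.B →₀ k)).toLinearMap ∘ₗ
        TensorProduct.map (T.counit k) LinearMap.id ∘ₗ T.comul k = LinearMap.id) ∧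
    ((TensorProduct.rid k (T.B →₀ k)).toLinearMap ∘ₗ
        TensorProduct.map LinearMap.id (T.counit k) ∘ₗ T.comul k = LinearMap.id) := by
  classical
  refine ⟨?_, ?_, ?_⟩
  · apply Finsupp.lhom_ext
    intro A b
    have hb : (Finsupp.single A b : T.B →₀ k) = b • Finsupp.single A 1 := by
      rw [Finsupp.smul_single, smul_eq_mul, mul_one]
    rw [hb, map_smul, map_smul]
    congr 1
    rw [LinearMap.comp_apply, LinearMap.comp_apply, LinearMap.comp_apply,
      T.comul_single]
    simp only [map_sum, map_smul, TensorProduct.map_tmul, LinearMap.id_coe, id_eq,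
      T.comul_single, TensorProduct.sum_tmul, TensorProduct.smul_tmul',
      TensorProduct.tmul_sum, TensorProduct.tmul_smul, Finset.smul_sum,
      LinearEquiv.coe_coe, TensorProduct.assoc_tmul, smul_smul]
    simp only [← TensorProduct.smul_tmul', TensorProduct.tmul_smul, smul_smul]
    have key : ∀ U V W : T.B,
        ((if T.right (T.hcomp U V) = T.left W ∧ T.hcomp (T.hcomp U V) W = A then
            (T.urc W : k)⁻¹ else 0) *
          if T.right U = T.left V ∧ T.hcomp U V = T.hcomp U V then (T.urc V : k)⁻¹
            else 0)
        = ((if T.right V = T.left W ∧ T.hcomp V W = T.hcomp V W then (T.urc W : k)⁻¹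
            else 0) *
          if T.right U = T.left (T.hcomp V W) ∧ T.hcomp U (T.hcomp V W) = A then
            (T.urc (T.hcomp V W) : k)⁻¹ else 0) := by
      intro U V W
      by_cases h1 : T.right U = T.left V <;> by_cases h2 : T.right V = T.left W
      · rw [if_pos (show T.right U = T.left V ∧ T.hcomp U V = T.hcomp U V from
            ⟨h1, rfl⟩),
          if_pos (show T.right V = T.left W ∧ T.hcomp V W = T.hcomp V W from
            ⟨h2, rfl⟩),
          T.right_hcomp U V h1, T.left_hcomp V W h2, T.urc_hcomp V W h2,
          T.hcomp_assoc U V W h1 h2]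
        by_cases hA : T.hcomp U (T.hcomp V W) = A
        · rw [if_pos (show T.right V = T.left W ∧ T.hcomp U (T.hcomp V W) = A from
              ⟨h2, hA⟩),
            if_pos (show T.right U = T.left V ∧ T.hcomp U (T.hcomp V W) = A from
              ⟨h1, hA⟩), mul_comm]
        · rw [if_neg
              (show ¬(T.right V = T.left W ∧ T.hcomp U (T.hcomp V W) = A) from
                fun hc => hA hc.2),
            if_neg
              (show ¬(T.right U = T.left V ∧ T.hcomp U (T.hcomp V W) = A) from
                fun hc => hA hc.2), zero_mul, mul_zero]
      · rw [if_neg (show ¬(T.right (T.hcomp U V) = T.left W ∧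
              T.hcomp (T.hcomp U V) W = A) from
            fun hc => h2 ((T.right_hcomp U V h1).symm.trans hc.1)), zero_mul,
          if_neg (show ¬(T.right V = T.left W ∧ T.hcomp V W = T.hcomp V W) from
            fun hc => h2 hc.1), zero_mul]
      · rw [if_neg (show ¬(T.right U = T.left V ∧ T.hcomp U V = T.hcomp U V) from
            fun hc => h1 hc.1), mul_zero,
          if_neg (show ¬(T.right U = T.left (T.hcomp V W) ∧
              T.hcomp U (T.hcomp V W) = A) from
            fun hc => h1 (hc.1.trans (T.left_hcomp V W h2))), mul_zero]
      · rw [if_neg (show ¬(T.right U = T.left V ∧ T.hcomp U V = T.hcomp U V) from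
            fun hc => h1 hc.1), mul_zero,
          if_neg (show ¬(T.right V = T.left W ∧ T.hcomp V W = T.hcomp V W) from
            fun hc => h2 hc.1), zero_mul]
    trans (∑ U : T.B, ∑ V : T.B, ∑ W : T.B,
        ((if T.right (T.hcomp U V) = T.left W ∧ T.hcomp (T.hcomp U V) W = A then
            (T.urc W : k)⁻¹ else 0) *
          if T.right U = T.left V ∧ T.hcomp U V = T.hcomp U V then (T.urc V : k)⁻¹
            else 0) •
          (Finsupp.single U (1 : k) ⊗ₜ[k]
            (Finsupp.single V (1 : k) ⊗ₜ[k] Finsupp.single W (1 : k))))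
    · rw [sum_comm4]
      conv_rhs => rw [← sum_comm3]
      refine Finset.sum_congr rfl fun W _ => Finset.sum_congr rfl fun U _ =>
        Finset.sum_congr rfl fun V _ => ?_
      rw [Finset.sum_eq_single (T.hcomp U V)]
      · intro X _ hX
        rw [if_neg (show ¬(T.right U = T.left V ∧ T.hcomp U V = X) from
            fun hc => hX hc.2.symm), mul_zero, zero_smul]
      · intro h; exact absurd (Finset.mem_univ _) h
    · refine Eq.trans ?_ (Finset.sum_congr rfl fun X _ =>
        (sum_comm3 fun y u v =>
          ((if T.right u = T.left v ∧ T.hcomp u v = y then (T.urc v : k)⁻¹ else 0) *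
            if T.right X = T.left y ∧ T.hcomp X y = A then (T.urc y : k)⁻¹ else 0) •
          (Finsupp.single X (1 : k) ⊗ₜ[k]
            (Finsupp.single u (1 : k) ⊗ₜ[k] Finsupp.single v (1 : k)))).symm)
      refine Finset.sum_congr rfl fun U _ => Finset.sum_congr rfl fun V _ =>
        Finset.sum_congr rfl fun W _ => ?_
      rw [Finset.sum_eq_single (T.hcomp V W)]
      · exact congrArg (· • _) (key U V W)
      · intro Y _ hY
        rw [if_neg (show ¬(T.right V = T.left W ∧ T.hcomp V W = Y) from
            fun hc => hY hc.2.symm), zero_mul, zero_smul]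
      · intro h; exact absurd (Finset.mem_univ _) h
  · apply Finsupp.lhom_ext
    intro A b
    have hb : (Finsupp.single A b : T.B →₀ k) = b • Finsupp.single A 1 := by
      rw [Finsupp.smul_single, smul_eq_mul, mul_one]
    rw [hb, map_smul, map_smul]
    congr 1
    simp only [LinearMap.comp_apply]
    rw [T.comul_single]
    simp only [map_sum, map_smul, TensorProduct.map_tmul, LinearMap.id_coe, id_eq,
      T.counit_single, LinearEquiv.coe_coe, TensorProduct.lid_tmul, smul_smul,
      LinearMap.id_apply]
    have keyL : ∀ X Y : T.B,
        ((if T.right X = T.left Y ∧ T.hcomp X Y = A then (T.urc Y : k)⁻¹ else 0) *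
          if ∃ g, X = T.gBh.id g then (T.ulc X : k) else 0)
        = if X = T.gBh.id (T.left A) ∧ Y = A then 1 else 0 := by
      intro X Y
      by_cases hX : ∃ g, X = T.gBh.id g
      · obtain ⟨g, rfl⟩ := hX
        rw [if_pos (⟨g, rfl⟩ : ∃ g', T.gBh.id g = T.gBh.id g')]
        by_cases h1 : T.right (T.gBh.id g) = T.left Y ∧ T.hcomp (T.gBh.id g) Y = A
        · obtain ⟨ha, hb2⟩ := h1
          have hg : g = T.left Y := (T.right_id g).symm.trans ha
          have hY : T.hcomp (T.gBh.id g) Y = Y := by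
            rw [hg]; exact T.gBh.id_comp Y
          have hYA : Y = A := hY.symm.trans hb2
          have hgA : T.left A = g := by rw [← hYA, ← hg]
          rw [if_pos (show T.right (T.gBh.id g) = T.left Y ∧
                T.hcomp (T.gBh.id g) Y = A from ⟨ha, hb2⟩),
            if_pos (show T.gBh.id g = T.gBh.id (T.left A) ∧ Y = A from
              ⟨by rw [hgA], hYA⟩),
            show ((T.ulc (T.gBh.id g) : k)) = (T.urc Y : k) from by
              rw [hg, T.ulc_id_left Y]]
          exact inv_mul_cancel₀ (T.urc_ne_zero k Y)
        · rw [if_neg h1, zero_mul, if_neg]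
          rintro ⟨hc1, hc2⟩
          apply h1
          have hg : g = T.left A := by
            have h3 := congrArg T.left hc1
            rwa [T.left_id, T.left_id] at h3
          constructor
          · rw [T.right_id, hg, hc2]
          · rw [hg, hc2]; exact T.gBh.id_comp A
      · rw [if_neg hX, mul_zero, if_neg]
        rintro ⟨hc1, -⟩
        exact hX ⟨T.left A, hc1⟩
    refine Eq.trans (Finset.sum_congr rfl fun X _ =>
      Finset.sum_congr rfl fun Y _ => by rw [keyL]) ?_
    simp [ite_and, Finset.sum_ite_irrel, Finset.sum_ite_eq']
  · apply Finsupp.lhom_ext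
    intro A b
    have hb : (Finsupp.single A b : T.B →₀ k) = b • Finsupp.single A 1 := by
      rw [Finsupp.smul_single, smul_eq_mul, mul_one]
    rw [hb, map_smul, map_smul]
    congr 1
    simp only [LinearMap.comp_apply]
    rw [T.comul_single]
    simp only [map_sum, map_smul, TensorProduct.map_tmul, LinearMap.id_coe, id_eq,
      T.counit_single, LinearEquiv.coe_coe, TensorProduct.rid_tmul, smul_smul,
      LinearMap.id_apply]
    have keyR : ∀ X Y : T.B,
        ((if T.right X = T.left Y ∧ T.hcomp X Y = A then (T.urc Y : k)⁻¹ else 0) *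
          if ∃ g, Y = T.gBh.id g then (T.ulc Y : k) else 0)
        = if Y = T.gBh.id (T.right A) ∧ X = A then 1 else 0 := by
      intro X Y
      by_cases hY : ∃ g, Y = T.gBh.id g
      · obtain ⟨g, rfl⟩ := hY
        rw [if_pos (⟨g, rfl⟩ : ∃ g', T.gBh.id g = T.gBh.id g')]
        by_cases h1 : T.right X = T.left (T.gBh.id g) ∧ T.hcomp X (T.gBh.id g) = A
        · obtain ⟨ha, hb2⟩ := h1
          have hg : T.right X = g := ha.trans (T.left_id g)
          have hXX : T.hcomp X (T.gBh.id g) = X := by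
            rw [← hg]; exact T.gBh.comp_id X
          have hXA : X = A := hXX.symm.trans hb2
          have hgr : T.right A = g := by rw [← hXA]; exact hg
          rw [if_pos (show T.right X = T.left (T.gBh.id g) ∧
                T.hcomp X (T.gBh.id g) = A from ⟨ha, hb2⟩),
            if_pos (show T.gBh.id g = T.gBh.id (T.right A) ∧ X = A from
              ⟨by rw [hgr], hXA⟩),
            show ((T.ulc (T.gBh.id g) : k)) = (T.urc (T.gBh.id g) : k) from by
              rw [T.ulc_id_eq_urc_id]]
          exact inv_mul_cancel₀ (T.urc_ne_zero k _)
        · rw [if_neg h1, zero_mul, if_neg]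
          rintro ⟨hc1, hc2⟩
          apply h1
          have hg : g = T.right A := by
            have h3 := congrArg T.right hc1
            rwa [T.right_id, T.right_id] at h3
          constructor
          · rw [T.left_id, hg, hc2]
          · rw [hg, hc2]; exact T.gBh.comp_id A
      · rw [if_neg hY, mul_zero, if_neg]
        rintro ⟨hc1, -⟩
        exact hY ⟨T.right A, hc1⟩
    refine Eq.trans (Finset.sum_congr rfl fun X _ =>
      Finset.sum_congr rfl fun Y _ => by rw [keyR]) ?_
    simp [ite_and, Finset.sum_ite_irrel, Finset.sum_ite_eq']
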